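/- For 0 < q < 1 and β ∈ ℝ, let s = √(q(1−q)), M̃(q) = (M(q) + I₂)/(2s) − I₂, and φ = (1 − 1/(2s)) β. Then for every vector v ∈ ℂ⁴ with zero amplitude on |11⟩ (i.e., v in span{|00⟩, |01⟩, |10⟩}), exp(−i β · blockdiag(0, M̃(q), 0)) · v = (P(φ) ⊗ P(φ)) · exp(−i (β/(2s)) · blockdiag(0, M(q), 0)) · v, where P(φ) = diag(1, e^{iφ}) is the single-qubit phase gate; that is, the scaled warm-started XY-block is implemented on the Hamming-weight-≤1 sector by rescaling the angle β ↦ β/(2s) and applying two single-qubit phase gates. -/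

import Mathlib

open Matrix Kronecker

/-- Two-qubit basis states are indexed by `Fin 2 × Fin 2`, ordered
`|00⟩, |01⟩, |10⟩, |11⟩`.  `blockdiag a B d` acts as the scalar `a` on `|00⟩`,
as the 2×2 matrix `B` on `span{|01⟩, |10⟩}`, and as the scalar `d` on `|11⟩`. -/
def blockdiag (a : ℂ) (B : Matrix (Fin 2) (Fin 2) ℂ) (d : ℂ) :
    Matrix (Fin 2 × Fin 2) (Fin 2 × Fin 2) ℂ := fun p r =>
  if p = (0, 0) ∧ r = (0, 0) then a
  else if p = (1, 1) ∧ r = (1, 1) then d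
  else if (p = (0, 1) ∨ p = (1, 0)) ∧ (r = (0, 1) ∨ r = (1, 0)) then B p.1 r.1
  else 0

/-- The single-qubit warm-start mixer `M(q)`, as a complex 2×2 matrix. -/
noncomputable def wsMixer (q : ℝ) : Matrix (Fin 2) (Fin 2) ℂ :=
  !![(1 - 2*q : ℝ), (-2 * Real.sqrt (q * (1 - q)) : ℝ);
     (-2 * Real.sqrt (q * (1 - q)) : ℝ), (2*q - 1 : ℝ)]

/-- The single-qubit phase gate `P(φ) = diag(1, e^{iφ})`. -/
noncomputable def phaseGate (φ : ℝ) : Matrix (Fin 2) (Fin 2) ℂ :=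
  !![1, 0; 0, Complex.exp (Complex.I * φ)]

/-!
Since `M̃ = (2s)⁻¹ M + ((2s)⁻¹ - 1) I₂`, the generator `blockdiag(0, M̃, 0)` splits as
`(2s)⁻¹ blockdiag(0, M, 0)` plus a multiple of the projector `Π = blockdiag(0, I₂, 0)` onto the
Hamming-weight-one sector. Every diagonal matrix with equal `|01⟩` and `|10⟩` entries, such as `Π`
and `P(φ) ⊗ P(φ)`, commutes with `blockdiag(0, B, 0)`, so the exponential factors as
`exp(-iβ(2s)⁻¹ blockdiag(0, M, 0)) · exp(iφ Π)`, and `exp(iφ Π)` agrees with `P(φ) ⊗ P(φ)`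
on vectors with no `|11⟩` amplitude.
-/

open NormedSpace

lemma blockdiag_zero_commute_diagonal (B : Matrix (Fin 2) (Fin 2) ℂ) {d : Fin 2 × Fin 2 → ℂ}
    (hd : d (0, 1) = d (1, 0)) : Commute (blockdiag 0 B 0) (diagonal d) := by
  ext ⟨i, j⟩ ⟨k, l⟩
  simp only [mul_diagonal, diagonal_mul]
  fin_cases i <;> fin_cases j <;> fin_cases k <;> fin_cases l <;>
    simp [blockdiag, hd, mul_comm]

lemma blockdiag_zero_one_zero_eq_diagonal :
    blockdiag 0 1 0 = diagonal fun p => if p = (0, 1) ∨ p = (1, 0) then 1 else 0 := by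
  ext ⟨i, j⟩ ⟨k, l⟩
  fin_cases i <;> fin_cases j <;> fin_cases k <;> fin_cases l <;> simp [blockdiag]

lemma phaseGate_eq_diagonal (φ : ℝ) :
    phaseGate φ = diagonal ![1, Complex.exp (Complex.I * φ)] := by
  ext i j
  fin_cases i <;> fin_cases j <;> simp [phaseGate]

lemma phaseGate_kronecker_phaseGate (φ : ℝ) :
    phaseGate φ ⊗ₖ phaseGate φ = diagonal fun p =>
      ![1, Complex.exp (Complex.I * φ)] p.1 * ![1, Complex.exp (Complex.I * φ)] p.2 := by
  rw [phaseGate_eq_diagonal, diagonal_kronecker_diagonal]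

lemma blockdiag_zero_commute_phaseGate_kronecker (B : Matrix (Fin 2) (Fin 2) ℂ) (φ : ℝ) :
    Commute (blockdiag 0 B 0) (phaseGate φ ⊗ₖ phaseGate φ) := by
  rw [phaseGate_kronecker_phaseGate]
  exact blockdiag_zero_commute_diagonal B (by simp)

lemma blockdiag_zero_smul_add_one_sub_one (B : Matrix (Fin 2) (Fin 2) ℂ) (c : ℂ) :
    blockdiag 0 (c • (B + 1) - 1) 0 = c • blockdiag 0 B 0 + (c - 1) • blockdiag 0 1 0 := by
  ext ⟨i, j⟩ ⟨k, l⟩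
  fin_cases i <;> fin_cases j <;> fin_cases k <;> fin_cases l <;> simp [blockdiag] <;> ring

-- `P(φ) ⊗ P(φ)` differs from this phase only on `|11⟩`, where it is `e^{2iφ}`.
lemma exp_smul_blockdiag_one_mulVec (φ : ℝ) {v : Fin 2 × Fin 2 → ℂ} (hv : v (1, 1) = 0) :
    (exp ((Complex.I * φ) • blockdiag 0 1 0)).mulVec v
      = (phaseGate φ ⊗ₖ phaseGate φ).mulVec v := by
  rw [blockdiag_zero_one_zero_eq_diagonal, ← diagonal_smul, exp_diagonal,
    phaseGate_kronecker_phaseGate]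
  ext ⟨i, j⟩
  fin_cases i <;> fin_cases j <;>
    simp [mulVec_diagonal, Pi.exp_def, ← Complex.exp_eq_exp_ℂ, hv]

theorem exp_smul_blockdiag_smul_add_one_sub_one_mulVec (B : Matrix (Fin 2) (Fin 2) ℂ) (c β : ℝ)
    {v : Fin 2 × Fin 2 → ℂ} (hv : v (1, 1) = 0) :
    (exp ((-(Complex.I * β)) • blockdiag 0 ((c : ℂ) • (B + 1) - 1) 0)).mulVec v
      = ((phaseGate ((1 - c) * β) ⊗ₖ phaseGate ((1 - c) * β))
          * exp ((-(Complex.I * (β * c))) • blockdiag 0 B 0)).mulVec v := by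
  set A := (-(Complex.I * (β * c))) • blockdiag 0 B 0
  set φ : ℝ := (1 - c) * β
  have hsplit : (-(Complex.I * β)) • blockdiag 0 ((c : ℂ) • (B + 1) - 1) 0
      = A + (Complex.I * φ) • blockdiag 0 1 0 := by
    have hA : -(Complex.I * β) * c = -(Complex.I * (β * c)) := by ring
    have hφ : -(Complex.I * β) * (c - 1) = Complex.I * φ := by push_cast [φ]; ring
    rw [blockdiag_zero_smul_add_one_sub_one, smul_add, smul_smul, smul_smul, hA, hφ]
  have hcomm : Commute A ((Complex.I * φ) • blockdiag 0 1 0) := by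
    rw [blockdiag_zero_one_zero_eq_diagonal]
    exact ((blockdiag_zero_commute_diagonal B (by simp)).smul_left _).smul_right _
  have hP : Commute (exp A) (phaseGate φ ⊗ₖ phaseGate φ) :=
    ((blockdiag_zero_commute_phaseGate_kronecker B φ).smul_left _).exp_left
  rw [hsplit, Matrix.exp_add_of_commute _ _ hcomm, ← mulVec_mulVec,
    exp_smul_blockdiag_one_mulVec φ hv, mulVec_mulVec, hP.eq]

theorem statement16_general (q : ℝ) (β : ℝ)
    (s : ℝ)
    (Mt : Matrix (Fin 2) (Fin 2) ℂ)
    (hMt : Mt = ((2*s : ℝ) : ℂ)⁻¹ • (wsMixer q + 1) - 1)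
    (φ : ℝ) (hφ : φ = (1 - 1/(2*s)) * β)
    (v : Fin 2 × Fin 2 → ℂ) (hv : v (1, 1) = 0) :
    (NormedSpace.exp ((-(Complex.I * β)) • blockdiag 0 Mt 0)).mulVec v
      = ((phaseGate φ ⊗ₖ phaseGate φ)
          * NormedSpace.exp ((-(Complex.I * (β/(2*s)))) • blockdiag 0 (wsMixer q) 0)).mulVec v := by
  have hc : ((2 * s : ℝ) : ℂ)⁻¹ = ((1 / (2 * s) : ℝ) : ℂ) := by push_cast; ring
  have hβ : (β : ℂ) / (2 * s) = β * ((1 / (2 * s) : ℝ) : ℂ) := by push_cast; ring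
  rw [hMt, hφ, hc, hβ]
  exact exp_smul_blockdiag_smul_add_one_sub_one_mulVec (wsMixer q) (1 / (2 * s)) β hv

/-- For `0 < q < 1` and `β ∈ ℝ`, with `s = √(q(1-q))`,
`M̃(q) = (M(q) + I₂)/(2s) - I₂` and `φ = (1 - 1/(2s))β`, for every vector
`v ∈ ℂ⁴` with zero amplitude on `|11⟩`,
`exp(-iβ·blockdiag(0, M̃(q), 0))·v
  = (P(φ) ⊗ P(φ)) · exp(-i(β/(2s))·blockdiag(0, M(q), 0))·v`:
the scaled warm-started XY-block is implemented on the Hamming-weight-≤1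
sector by rescaling `β ↦ β/(2s)` and two single-qubit phase gates. -/
theorem statement16 (q : ℝ) (hq0 : 0 < q) (hq1 : q < 1) (β : ℝ)
    (s : ℝ) (hs : s = Real.sqrt (q * (1 - q)))
    (Mt : Matrix (Fin 2) (Fin 2) ℂ)
    (hMt : Mt = ((2*s : ℝ) : ℂ)⁻¹ • (wsMixer q + 1) - 1)
    (φ : ℝ) (hφ : φ = (1 - 1/(2*s)) * β)
    (v : Fin 2 × Fin 2 → ℂ) (hv : v (1, 1) = 0) :
    (NormedSpace.exp ((-(Complex.I * β)) • blockdiag 0 Mt 0)).mulVec v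
      = ((phaseGate φ ⊗ₖ phaseGate φ)
          * NormedSpace.exp ((-(Complex.I * (β/(2*s)))) • blockdiag 0 (wsMixer q) 0)).mulVec v :=
  statement16_general q β s Mt hMt φ hφ v hv
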